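/- Under Condition B, for every k ∈ C, the expected hitting time of s by the returned process X^μ started at k satisfies E_k[τ^μ_{{s}}] ≤ T_k + (1 − p_k) μ(T)/p. -/

import Mathlib

/- Framework: a continuous-time Markov chain on a countable state space is given by
its jump rates `q : S → S → ℝ≥0∞`.  Hitting probabilities, expected hitting times
and occupation times (Green functions) are defined as the minimal nonnegative
solutions of the classical first-step systems, realised as pointwise infima over
all solutions. -/

open scoped ENNReal
open ENNReal

noncomputable section
open Classical
variable {S : Type*}

/-- Total jump rate out of a state. -/
def totalRate (q : S → S → ℝ≥0∞) (i : S) : ℝ≥0∞ := ∑' j, q i j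

/-- Jump-chain transition probability. -/
def jumpP (q : S → S → ℝ≥0∞) (i j : S) : ℝ≥0∞ := q i j / totalRate q i

/-- `h` solves the first-step system for the probability of hitting `A` before `B`. -/
def IsBeforeSol (q : S → S → ℝ≥0∞) (A B : Set S) (h : S → ℝ≥0∞) : Prop :=
  (∀ a ∈ A, h a = 1) ∧ (∀ b ∈ B, h b = 0) ∧
    (∀ j, j ∉ A → j ∉ B → h j = ∑' i, jumpP q j i * h i) ∧ (∀ j, h j ≤ 1)

/-- `P_k[X hits A before B]`: the minimal solution of the corresponding system. -/
def probBefore (q : S → S → ℝ≥0∞) (A B : Set S) (k : S) : ℝ≥0∞ :=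
  ⨅ h ∈ {h | IsBeforeSol q A B h}, h k

/-- `T` solves the expected-hitting-time system for `A`. -/
def IsHitTimeSol (q : S → S → ℝ≥0∞) (A : Set S) (T : S → ℝ≥0∞) : Prop :=
  (∀ a ∈ A, T a = 0) ∧
    ∀ j, j ∉ A → T j = (totalRate q j)⁻¹ + ∑' i, jumpP q j i * T i

/-- Expected hitting time of `A` from `k`: the minimal nonnegative solution. -/
def hitTime (q : S → S → ℝ≥0∞) (A : Set S) (k : S) : ℝ≥0∞ :=
  ⨅ T ∈ {T | IsHitTimeSol q A T}, T k

/-- Expected value of `τ_A` (first time in `A` after having been outside `A`)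
starting from `k ∈ A`: hold at `k`, jump, then hit `A`. -/
def retTime (q : S → S → ℝ≥0∞) (A : Set S) (k : S) : ℝ≥0∞ :=
  (totalRate q k)⁻¹ + ∑' i, jumpP q k i * hitTime q A i

/-- `T_k = E_k[τ_{{s,z}}]`, with the first-return convention on `{s,z}`. -/
def excT (q : S → S → ℝ≥0∞) (s z k : S) : ℝ≥0∞ :=
  if k = s ∨ k = z then retTime q {s, z} k else hitTime q {s, z} k

/-- `p_k = P_k[X_{τ_{{s,z}}} = s]`, the probability of reaching `s` before `z`. -/
def pHit (q : S → S → ℝ≥0∞) (s z k : S) : ℝ≥0∞ :=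
  if k = s ∨ k = z then ∑' i, jumpP q k i * probBefore q {s} {z} i
  else probBefore q {s} {z} k

/-- `p = inf_{k ∈ C} p_k`, the infimum over the non-cemetery states. -/
def pInf (q : S → S → ℝ≥0∞) (s z : S) : ℝ≥0∞ :=
  ⨅ k : {k : S // k ≠ z}, pHit q s z (k : S)

/-- Green-function system: expected time spent at `i` before hitting `A`. -/
def IsGreenSol (q : S → S → ℝ≥0∞) (A : Set S) (i : S) (G : S → ℝ≥0∞) : Prop :=
  (∀ a ∈ A, G a = 0) ∧
    ∀ j, j ∉ A →
      G j = (if j = i then (totalRate q j)⁻¹ else 0) + ∑' l, jumpP q j l * G l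

/-- Expected time spent at `i` before hitting `A`, starting from `k`. -/
def green (q : S → S → ℝ≥0∞) (A : Set S) (i k : S) : ℝ≥0∞ :=
  ⨅ G ∈ {G | IsGreenSol q A i G}, G k

/-- `T_{s i}`: expected time spent at `i` before `τ_{{s,z}}`, starting at `s`. -/
def occT (q : S → S → ℝ≥0∞) (s z i : S) : ℝ≥0∞ :=
  (if i = s then (totalRate q s)⁻¹ else 0) + ∑' j, jumpP q s j * green q {s, z} i j

/-- The returned process `X^μ`: `q^μ_{ij} = q_{ij} + q_{iz} μ_j` on `C = S \ {z}`;
the cemetery `z` becomes unreachable. -/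
def retChain (q : S → S → ℝ≥0∞) (z : S) (μ : S → ℝ≥0∞) (i j : S) : ℝ≥0∞ :=
  if i = z ∨ j = z then 0 else q i j + q i z * μ j

/-- `μ(T) = Σ_{k ∈ C} μ(k) T_k`. -/
def muT (q : S → S → ℝ≥0∞) (s z : S) (μ : S → ℝ≥0∞) : ℝ≥0∞ :=
  ∑' k, μ k * excT q s z k

/-- `π` is a stationary distribution of the chain with rates `q`. -/
def IsStationaryRates (q : S → S → ℝ≥0∞) (π : S → ℝ≥0∞) : Prop :=
  (∑' k, π k = 1) ∧ ∀ j, ∑' i, π i * q i j = π j * totalRate q j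

/-- Total variation distance between two distributions on `S`. -/
def dTV (π ν : S → ℝ≥0∞) : ℝ≥0∞ := (∑' k, ((π k - ν k) + (ν k - π k))) / 2

end

/-!
Write `g = E_·[τ_{s,z}]` and `h = P_·[s before z]` for the original chain, and
`c = μ(g) / μ(h)`. Renewal at the returns to `z` suggests `E_k[τ^μ_s] = g k + (1 - h k) c`:
run until `{s, z}` is hit and, if that happens at `z`, restart from `μ`. Since
`μ(g + (1 - h) c) = μ(g) + (1 - μ(h)) c = c`, this function solves the first-step system
for hitting `s` in the returned chain, hence dominates its minimal solution. The bound
follows from `μ(g) ≤ μ(T)` and `μ(h) ≥ p`; for `k = s` one applies the same estimate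
after the first jump.
-/

open Function

namespace ENNReal

theorem tsum_mul_one_sub {ι : Type*} {p h : ι → ℝ≥0∞} (hh : ∀ i, h i ≤ 1)
    (hp : ∑' i, p i ≠ ⊤) : ∑' i, p i * (1 - h i) = ∑' i, p i - ∑' i, p i * h i := by
  have hph : ∑' i, p i * h i ≤ ∑' i, p i :=
    ENNReal.tsum_le_tsum fun i => mul_le_of_le_one_right' (hh i)
  refine ENNReal.eq_sub_of_add_eq (ne_top_of_le_ne_top hp hph) ?_
  rw [← ENNReal.tsum_add]
  exact tsum_congr fun i => by rw [← mul_add, tsub_add_cancel_of_le (hh i), mul_one]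

end ENNReal

section MinimalSolutions

variable {S : Type*} (q : S → S → ℝ≥0∞)

theorem tsum_jumpP_le_one (j : S) : ∑' i, jumpP q j i ≤ 1 := by
  simp only [jumpP, div_eq_mul_inv, ENNReal.tsum_mul_right]
  exact ENNReal.mul_inv_le_one _

theorem tsum_jumpP_eq_one {j : S} (h0 : totalRate q j ≠ 0) (htop : totalRate q j ≠ ⊤) :
    ∑' i, jumpP q j i = 1 := by
  simp only [jumpP, div_eq_mul_inv, ENNReal.tsum_mul_right]
  exact ENNReal.mul_inv_cancel h0 htop

theorem iInf_apply_eq_lfp {α : Type*} [CompleteLattice α] (F : (S → α) →o (S → α))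
    {P : (S → α) → Prop} (hfix : ∀ T, P T → F T = T) (hlfp : P F.lfp) :
    (fun k => ⨅ T ∈ {T | P T}, T k) = F.lfp :=
  funext fun k => le_antisymm (iInf₂_le _ hlfp) (le_iInf₂ fun T hT => F.lfp_le (hfix T hT).le k)

open Classical in
noncomputable def hitOp (A : Set S) : (S → ℝ≥0∞) →o (S → ℝ≥0∞) where
  toFun T j := if j ∈ A then 0 else (totalRate q j)⁻¹ + ∑' i, jumpP q j i * T i
  monotone' T T' hT j := by
    dsimp only
    split_ifs
    · exact le_rfl
    · gcongr with i
      exact hT i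

open Classical in
theorem hitOp_apply (A : Set S) (T : S → ℝ≥0∞) (j : S) :
    hitOp q A T j = if j ∈ A then 0 else (totalRate q j)⁻¹ + ∑' i, jumpP q j i * T i :=
  rfl

theorem isHitTimeSol_iff {A : Set S} {T : S → ℝ≥0∞} :
    IsHitTimeSol q A T ↔ hitOp q A T = T := by
  simp only [IsHitTimeSol, funext_iff, hitOp_apply]
  refine ⟨fun ⟨h0, heq⟩ j => ?_, fun h => ⟨fun a ha => ?_, fun j hj => ?_⟩⟩
  · split_ifs with hj
    exacts [(h0 j hj).symm, (heq j hj).symm]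
  · simpa [ha] using (h a).symm
  · simpa [hj] using (h j).symm

theorem isHitTimeSol_hitTime (A : Set S) : IsHitTimeSol q A (hitTime q A) := by
  have hlfp := (isHitTimeSol_iff q).2 (hitOp q A).map_lfp
  have heq : hitTime q A = (hitOp q A).lfp :=
    iInf_apply_eq_lfp _ (fun _ => (isHitTimeSol_iff q).1) hlfp
  rwa [heq]

theorem hitTime_le_of_isHitTimeSol {A : Set S} {T : S → ℝ≥0∞} (hT : IsHitTimeSol q A T)
    (k : S) : hitTime q A k ≤ T k :=
  iInf₂_le T hT

open Classical in
noncomputable def beforeOp (A B : Set S) : (S → ℝ≥0∞) →o (S → ℝ≥0∞) where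
  toFun h j := if j ∈ A then 1 else if j ∈ B then 0 else ∑' i, jumpP q j i * h i
  monotone' h h' hh j := by
    dsimp only
    split_ifs
    · exact le_rfl
    · exact le_rfl
    · gcongr with i
      exact hh i

open Classical in
theorem beforeOp_apply (A B : Set S) (h : S → ℝ≥0∞) (j : S) :
    beforeOp q A B h j = if j ∈ A then 1 else if j ∈ B then 0 else ∑' i, jumpP q j i * h i :=
  rfl

theorem isBeforeSol_iff {A B : Set S} (hAB : Disjoint A B) {h : S → ℝ≥0∞} :
    IsBeforeSol q A B h ↔ beforeOp q A B h = h ∧ h ≤ 1 := by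
  simp only [IsBeforeSol, funext_iff, beforeOp_apply, Pi.le_def, Pi.one_apply]
  refine ⟨fun ⟨h1, h0, heq, hle⟩ => ⟨fun j => ?_, hle⟩,
    fun ⟨h, hle⟩ => ⟨fun a ha => ?_, fun b hb => ?_, fun j hjA hjB => ?_, hle⟩⟩
  · split_ifs with hjA hjB
    exacts [(h1 j hjA).symm, (h0 j hjB).symm, (heq j hjA hjB).symm]
  · simpa [ha] using (h a).symm
  · simpa [hb, hAB.notMem_of_mem_right hb] using (h b).symm
  · simpa [hjA, hjB] using (h j).symm

theorem isBeforeSol_probBefore {A B : Set S} (hAB : Disjoint A B) :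
    IsBeforeSol q A B (probBefore q A B) := by
  have hle : (beforeOp q A B).lfp ≤ 1 := by
    refine OrderHom.lfp_le _ fun j => ?_
    simp only [beforeOp_apply, Pi.one_apply, mul_one]
    split_ifs
    exacts [le_rfl, zero_le_one, tsum_jumpP_le_one q j]
  have hlfp := (isBeforeSol_iff q hAB).2 ⟨(beforeOp q A B).map_lfp, hle⟩
  have heq : probBefore q A B = (beforeOp q A B).lfp :=
    iInf_apply_eq_lfp _ (fun _ hh => ((isBeforeSol_iff q hAB).1 hh).1) hlfp
  rwa [heq]

end MinimalSolutions

section ReturnedChain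

open Classical

variable {S : Type*} {q : S → S → ℝ≥0∞} {z : S} {μ : S → ℝ≥0∞}

theorem totalRate_retChain_self : totalRate (retChain q z μ) z = 0 := by
  simp [totalRate, retChain]

theorem totalRate_retChain (hμz : μ z = 0) (hμ1 : ∑' i, μ i = 1) {j : S} (hj : j ≠ z)
    (hqj : q j z ≠ ⊤) : totalRate (retChain q z μ) j = totalRate q j := by
  have key : ∑' i, (q j i + q j z * μ i) = q j z + totalRate (retChain q z μ) j := by
    rw [ENNReal.tsum_eq_add_tsum_ite z]
    simp only [hμz, mul_zero, add_zero, totalRate, retChain, hj, false_or]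
  rw [ENNReal.tsum_add, ENNReal.tsum_mul_left, hμ1, mul_one, add_comm] at key
  exact ((ENNReal.add_right_inj hqj).1 key).symm

theorem tsum_jumpP_retChain_mul (hμz : μ z = 0) (hμ1 : ∑' i, μ i = 1) {j : S} (hj : j ≠ z)
    (hqj : q j z ≠ ⊤) (f : S → ℝ≥0∞) :
    ∑' i, jumpP (retChain q z μ) j i * f i
      = ∑' i, jumpP q j i * update f z (∑' l, μ l * f l) i := by
  have hsplit : ∀ i, jumpP (retChain q z μ) j i * f i
      = (if i = z then 0 else jumpP q j i * f i) + jumpP q j z * (μ i * f i) := by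
    intro i
    by_cases hi : i = z
    · simp [hi, hμz, jumpP, retChain]
    · simp only [jumpP, totalRate_retChain hμz hμ1 hj hqj, retChain, hj, hi, or_self,
        if_false, div_eq_mul_inv]
      ring
  rw [tsum_congr hsplit, ENNReal.tsum_add, ENNReal.tsum_mul_left,
    ENNReal.tsum_eq_add_tsum_ite z (f := fun i => jumpP q j i * update f z _ i), add_comm]
  simp only [update_self]
  congr 1
  refine tsum_congr fun i => ?_
  split_ifs with hi
  · rfl
  · rw [update_of_ne hi]

end ReturnedChain

section Renewal

open Classical

variable {S : Type*} (q : S → S → ℝ≥0∞) (s z : S) (μ : S → ℝ≥0∞)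

/-- `E_μ[τ^μ_{s}]`, computed by renewal at the returns to `z`. -/
noncomputable def cycleTime : ℝ≥0∞ :=
  (∑' i, μ i * hitTime q {s, z} i) / ∑' i, μ i * probBefore q {s} {z} i

noncomputable def renewalHitTime (k : S) : ℝ≥0∞ :=
  hitTime q {s, z} k + (1 - probBefore q {s} {z} k) * cycleTime q s z μ

variable {q s z μ}

theorem hitTime_pair_eq_zero {k : S} (hk : k = s ∨ k = z) : hitTime q {s, z} k = 0 :=
  (isHitTimeSol_hitTime q _).1 k hk

theorem isBeforeSol_probBefore_singleton (hsz : s ≠ z) :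
    IsBeforeSol q {s} {z} (probBefore q {s} {z}) :=
  isBeforeSol_probBefore q (Set.disjoint_singleton.2 hsz)

theorem pHit_le_probBefore (hsz : s ≠ z) {k : S} (hkz : k ≠ z) :
    pHit q s z k ≤ probBefore q {s} {z} k := by
  obtain ⟨h1, -, -, hle⟩ := isBeforeSol_probBefore_singleton (q := q) hsz
  by_cases hks : k = s
  · subst hks
    simp only [pHit, true_or, if_true, h1 k rfl]
    exact (ENNReal.tsum_le_tsum fun i => mul_le_of_le_one_right' (hle i)).trans
      (tsum_jumpP_le_one q k)
  · simp [pHit, hks, hkz]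

theorem pInf_le_probBefore (hsz : s ≠ z) {k : S} (hkz : k ≠ z) :
    pInf q s z ≤ probBefore q {s} {z} k :=
  (iInf_le (fun k : {k : S // k ≠ z} => pHit q s z k) ⟨k, hkz⟩).trans
    (pHit_le_probBefore hsz hkz)

theorem pInf_le_tsum_mul_probBefore (hsz : s ≠ z) (hμz : μ z = 0) (hμ1 : ∑' i, μ i = 1) :
    pInf q s z ≤ ∑' i, μ i * probBefore q {s} {z} i := by
  calc pInf q s z = ∑' i, μ i * pInf q s z := by rw [ENNReal.tsum_mul_right, hμ1, one_mul]
    _ ≤ ∑' i, μ i * probBefore q {s} {z} i := ENNReal.tsum_le_tsum fun i => by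
        by_cases hiz : i = z
        · simp [hiz, hμz]
        · exact mul_le_mul_right (pInf_le_probBefore hsz hiz) _

theorem hitTime_le_excT (k : S) : hitTime q {s, z} k ≤ excT q s z k := by
  by_cases hk : k = s ∨ k = z
  · simp [hitTime_pair_eq_zero hk]
  · simp [excT, hk]

theorem cycleTime_le (hsz : s ≠ z) (hμz : μ z = 0) (hμ1 : ∑' i, μ i = 1) :
    cycleTime q s z μ ≤ muT q s z μ / pInf q s z :=
  ENNReal.div_le_div (ENNReal.tsum_le_tsum fun i => mul_le_mul_right (hitTime_le_excT i) _)
    (pInf_le_tsum_mul_probBefore hsz hμz hμ1)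

theorem renewalHitTime_target (hsz : s ≠ z) : renewalHitTime q s z μ s = 0 := by
  obtain ⟨h1, -, -, -⟩ := isBeforeSol_probBefore_singleton (q := q) hsz
  simp [renewalHitTime, hitTime_pair_eq_zero (Or.inl rfl), h1 s rfl]

theorem renewalHitTime_cemetery (hsz : s ≠ z) :
    renewalHitTime q s z μ z = cycleTime q s z μ := by
  obtain ⟨-, h0, -, -⟩ := isBeforeSol_probBefore_singleton (q := q) hsz
  simp [renewalHitTime, hitTime_pair_eq_zero (Or.inr rfl), h0 z rfl]

theorem tsum_mul_renewalHitTime (hsz : s ≠ z) (hμ1 : ∑' i, μ i = 1)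
    (hb : ∑' i, μ i * probBefore q {s} {z} i ≠ 0) :
    ∑' i, μ i * renewalHitTime q s z μ i = cycleTime q s z μ := by
  obtain ⟨-, -, -, hle⟩ := isBeforeSol_probBefore_singleton (q := q) hsz
  set b := ∑' i, μ i * probBefore q {s} {z} i
  set c := cycleTime q s z μ
  have hb1 : b ≤ 1 :=
    (ENNReal.tsum_le_tsum fun i => mul_le_of_le_one_right' (hle i)).trans hμ1.le
  have hbc : b * c = ∑' i, μ i * hitTime q {s, z} i :=
    ENNReal.mul_div_cancel hb (ne_top_of_le_ne_top one_ne_top hb1)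
  calc ∑' i, μ i * renewalHitTime q s z μ i
      = ∑' i, μ i * hitTime q {s, z} i
        + (∑' i, μ i * (1 - probBefore q {s} {z} i)) * c := by
        simp only [renewalHitTime, mul_add, ← mul_assoc, ENNReal.tsum_add,
          ENNReal.tsum_mul_right, c]
    _ = b * c + (1 - b) * c := by rw [ENNReal.tsum_mul_one_sub hle (by simp [hμ1]), hμ1, hbc]
    _ = c := by rw [← add_mul, add_tsub_cancel_of_le hb1, one_mul]

theorem firstStep_retChain_renewalHitTime (hsz : s ≠ z) (hq : ∀ k, totalRate q k ≠ ⊤)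
    (hμz : μ z = 0) (hμ1 : ∑' i, μ i = 1) (hb : ∑' i, μ i * probBefore q {s} {z} i ≠ 0)
    {j : S} (hj : j ≠ z) :
    (totalRate (retChain q z μ) j)⁻¹
        + ∑' i, jumpP (retChain q z μ) j i * update (renewalHitTime q s z μ) z ⊤ i
      = (totalRate q j)⁻¹ + ∑' i, jumpP q j i * hitTime q {s, z} i
        + (∑' i, jumpP q j i * (1 - probBefore q {s} {z} i)) * cycleTime q s z μ := by
  have hqj : q j z ≠ ⊤ := ne_top_of_le_ne_top (hq j) (ENNReal.le_tsum z)
  have hμW :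
      ∑' l, μ l * update (renewalHitTime q s z μ) z ⊤ l = renewalHitTime q s z μ z := by
    rw [renewalHitTime_cemetery hsz, ← tsum_mul_renewalHitTime hsz hμ1 hb]
    refine tsum_congr fun l => ?_
    by_cases hl : l = z
    · simp [hl, hμz]
    · rw [update_of_ne hl]
  rw [totalRate_retChain hμz hμ1 hj hqj, tsum_jumpP_retChain_mul hμz hμ1 hj hqj, hμW,
    update_idem, update_eq_self, add_assoc]
  simp only [renewalHitTime, mul_add, ← mul_assoc, ENNReal.tsum_add, ENNReal.tsum_mul_right]

/- The returned chain leaves `z` at rate `0`, so its equation at `z` reads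
`T z = 0⁻¹ + … = ⊤`. -/
theorem isHitTimeSol_retChain_renewalHitTime (hsz : s ≠ z) (hq : ∀ k, totalRate q k ≠ ⊤)
    (hμz : μ z = 0) (hμ1 : ∑' i, μ i = 1) (hb : ∑' i, μ i * probBefore q {s} {z} i ≠ 0) :
    IsHitTimeSol (retChain q z μ) {s} (update (renewalHitTime q s z μ) z ⊤) := by
  obtain ⟨-, -, hheq, hhle⟩ := isBeforeSol_probBefore_singleton (q := q) hsz
  obtain ⟨-, hgeq⟩ := isHitTimeSol_hitTime q {s, z}
  refine ⟨fun a ha => ?_, fun j hjs => ?_⟩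
  · rw [Set.mem_singleton_iff.1 ha, update_of_ne hsz, renewalHitTime_target hsz]
  by_cases hjz : j = z
  · simp [hjz, totalRate_retChain_self]
  have hjsz : j ∉ ({s, z} : Set S) := by simp_all
  rw [update_of_ne hjz, firstStep_retChain_renewalHitTime hsz hq hμz hμ1 hb hjz,
    renewalHitTime, hgeq j hjsz]
  by_cases hR : totalRate q j = 0
  · simp [hR]
  have hsum := tsum_jumpP_eq_one q hR (hq j)
  rw [ENNReal.tsum_mul_one_sub hhle (by simp [hsum]), hsum, ← hheq j hjs hjz, add_assoc]

theorem hitTime_retChain_le (hsz : s ≠ z) (hq : ∀ k, totalRate q k ≠ ⊤)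
    (hμz : μ z = 0) (hμ1 : ∑' i, μ i = 1) (hb : ∑' i, μ i * probBefore q {s} {z} i ≠ 0)
    {k : S} (hk : k ≠ z) : hitTime (retChain q z μ) {s} k ≤ renewalHitTime q s z μ k := by
  simpa [update_of_ne hk] using hitTime_le_of_isHitTimeSol _
    (isHitTimeSol_retChain_renewalHitTime hsz hq hμz hμ1 hb) k

theorem retTime_retChain_le (hsz : s ≠ z) (hq : ∀ k, totalRate q k ≠ ⊤)
    (hμz : μ z = 0) (hμ1 : ∑' i, μ i = 1) (hb : ∑' i, μ i * probBefore q {s} {z} i ≠ 0) :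
    retTime (retChain q z μ) {s} s
      ≤ retTime q {s, z} s + (1 - pHit q s z s) * cycleTime q s z μ := by
  obtain ⟨-, -, -, hhle⟩ := isBeforeSol_probBefore_singleton (q := q) hsz
  have hsum := tsum_jumpP_le_one q s
  calc retTime (retChain q z μ) {s} s
      ≤ (totalRate (retChain q z μ) s)⁻¹
          + ∑' i, jumpP (retChain q z μ) s i * update (renewalHitTime q s z μ) z ⊤ i := by
        unfold retTime
        gcongr with i
        exact hitTime_le_of_isHitTimeSol _
          (isHitTimeSol_retChain_renewalHitTime hsz hq hμz hμ1 hb) i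
    _ = retTime q {s, z} s
          + (∑' i, jumpP q s i * (1 - probBefore q {s} {z} i)) * cycleTime q s z μ :=
        firstStep_retChain_renewalHitTime hsz hq hμz hμ1 hb hsz
    _ ≤ retTime q {s, z} s + (1 - pHit q s z s) * cycleTime q s z μ := by
        rw [ENNReal.tsum_mul_one_sub hhle (ne_top_of_le_ne_top one_ne_top hsum)]
        simp only [pHit, true_or, if_true]
        gcongr

end Renewal

theorem stmt_1_general {S : Type*} (q : S → S → ℝ≥0∞) (z s : S)
    (hsz : s ≠ z) (hq : ∀ k, totalRate q k ≠ ⊤)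
    (hp : 0 < pInf q s z)
    (μ : S → ℝ≥0∞) (hμz : μ z = 0) (hμ1 : ∑' k, μ k = 1) :
    ∀ k, k ≠ z →
      excT (retChain q z μ) s s k ≤
        excT q s z k + (1 - pHit q s z k) * (muT q s z μ / pInf q s z) := by
  intro k hkz
  have hb := (hp.trans_le (pInf_le_tsum_mul_probBefore hsz hμz hμ1)).ne'
  have hc := cycleTime_le (q := q) hsz hμz hμ1
  by_cases hks : k = s
  · subst hks
    simp only [excT, true_or, if_true, Set.pair_eq_singleton]
    exact (retTime_retChain_le hsz hq hμz hμ1 hb).trans (by gcongr)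
  · simp only [excT, pHit, hks, hkz, or_self, if_false, Set.pair_eq_singleton]
    exact (hitTime_retChain_le hsz hq hμz hμ1 hb hkz).trans (by unfold renewalHitTime; gcongr)

/-- Lemma 2.2(ii): `E_k[τ^μ_{s}] ≤ T_k + (1 - p_k) μ(T)/p` for every `k ∈ C`. -/
theorem stmt_1 {S : Type*} [Countable S] (q : S → S → ℝ≥0∞) (z s : S)
    (hsz : s ≠ z) (hq : ∀ k, totalRate q k ≠ ⊤) (hqz : totalRate q z = 0)
    (hp : 0 < pInf q s z) (hT : ∀ k, k ≠ z → excT q s z k < ⊤)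
    (μ : S → ℝ≥0∞) (hμz : μ z = 0) (hμ1 : ∑' k, μ k = 1) :
    ∀ k, k ≠ z →
      excT (retChain q z μ) s s k ≤
        excT q s z k + (1 - pHit q s z k) * (muT q s z μ / pInf q s z) :=
  stmt_1_general q z s hsz hq hp μ hμz hμ1
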